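/- If f : ℝ^{m×n} → ℝ is 1-Λ-norm Lipschitz smooth with positive definite Λ ∈ ℝ^{n×n} (i.e., ‖∇f(W) − ∇f(W')‖_{Λ^{-1}} ≤ ‖W − W'‖_Λ for all W, W'), then f is ‖Λ‖_* spectral norm Lipschitz smooth, i.e., ‖∇f(W) − ∇f(W')‖_* ≤ ‖Λ‖_* · ‖W − W'‖_op for all W, W'. -/

import Mathlib

open scoped BigOperators
open Matrix

/-- Nuclear norm of a real matrix: the sum of its singular values. -/
noncomputable def nucNorm {m n : ℕ} (A : Matrix (Fin m) (Fin n) ℝ) : ℝ :=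
  ∑ j, Real.sqrt ((Matrix.isHermitian_conjTranspose_mul_self A).eigenvalues j)

/-- Spectral (operator) norm of a real matrix: the largest singular value. -/
noncomputable def specNorm {m n : ℕ} (A : Matrix (Fin m) (Fin n) ℝ) : ℝ :=
  Real.sqrt (⨆ j, (Matrix.isHermitian_conjTranspose_mul_self A).eigenvalues j)

/-- The `Λ`-weighted norm `‖A‖_Λ = sqrt (trace (A Λ Aᵀ))`. -/
noncomputable def lamNorm {m n : ℕ} (Λ : Matrix (Fin n) (Fin n) ℝ)
    (A : Matrix (Fin m) (Fin n) ℝ) : ℝ :=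
  Real.sqrt (A * Λ * Aᵀ).trace

/-!
With `P = (GᵀG)^{1/2}` we have `‖G‖_* = tr P`. Cauchy–Schwarz for `tr (X Yᵀ)`, read as the
Frobenius pairing of `X Λ^{-1/2}` and `Y Λ^{1/2}`, gives
`tr P ≤ ‖P‖_{Λ⁻¹} ‖I‖_Λ = ‖G‖_{Λ⁻¹} √(tr Λ)`.
On the other side `DᵀD ≤ ‖D‖_op² I` in the Loewner order, so `‖D‖_Λ² = tr (Λ DᵀD) ≤ ‖D‖_op² tr Λ`.
Chaining the two through the hypothesis bounds `‖∇f(W) - ∇f(W')‖_*` by `tr Λ ‖W - W'‖_op`,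
and `tr Λ = ‖Λ‖_*` since `Λ` is positive semidefinite.
-/

open scoped MatrixOrder ComplexOrder

namespace Matrix

lemma trace_mul_transpose_le {m n : Type*} [Fintype m] [Fintype n] (A B : Matrix m n ℝ) :
    (A * Bᵀ).trace ≤ √(A * Aᵀ).trace * √(B * Bᵀ).trace := by
  have hsum (X Y : Matrix m n ℝ) : (X * Yᵀ).trace = ∑ p : m × n, X p.1 p.2 * Y p.1 p.2 := by
    simp [trace, mul_apply, Fintype.sum_prod_type]
  simpa only [hsum, pow_two] using Real.sum_mul_le_sqrt_mul_sqrt Finset.univ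
    (fun p : m × n => A p.1 p.2) (fun p => B p.1 p.2)

variable {𝕜 n : Type*} [RCLike 𝕜] [Fintype n] [DecidableEq n]

lemma IsHermitian.trace_cfc {A : Matrix n n 𝕜} (hA : A.IsHermitian) (f : ℝ → ℝ) :
    (cfc f A).trace = ∑ i, (f (hA.eigenvalues i) : 𝕜) := by
  rw [hA.cfc_eq, IsHermitian.cfc, Unitary.conjStarAlgAut_apply, trace_mul_cycle,
    Unitary.coe_star_mul_self, Matrix.one_mul, trace_diagonal]
  rfl

lemma IsHermitian.le_iSup_eigenvalues_smul_one {A : Matrix n n 𝕜} (hA : A.IsHermitian) :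
    A ≤ (⨆ i, hA.eigenvalues i) • (1 : Matrix n n 𝕜) := by
  rw [← Algebra.algebraMap_eq_smul_one]
  refine le_algebraMap_of_spectrum_le (fun x hx => ?_) hA.isSelfAdjoint
  rw [hA.spectrum_real_eq_range_eigenvalues] at hx
  obtain ⟨i, rfl⟩ := hx
  exact le_ciSup (Set.finite_range _).bddAbove i

lemma PosSemidef.trace_mul_nonneg {A B : Matrix n n 𝕜} (hA : A.PosSemidef) (hB : B.PosSemidef) :
    0 ≤ (A * B).trace := by
  obtain ⟨S, hS, rfl⟩ : ∃ S : Matrix n n 𝕜, S.IsHermitian ∧ A = S * S :=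
    ⟨CFC.sqrt A, (CFC.sqrt_nonneg A).posSemidef.isHermitian,
      (CFC.sqrt_mul_sqrt_self A hA.nonneg).symm⟩
  rw [← trace_mul_cycle S B S]
  simpa only [hS.eq] using (hB.conjTranspose_mul_mul_same S).trace_nonneg

lemma PosSemidef.trace_mul_le_trace_mul {A B C : Matrix n n 𝕜} (hC : C.PosSemidef)
    (hAB : A ≤ B) : (C * A).trace ≤ (C * B).trace := by
  have h := hC.trace_mul_nonneg (le_iff.mp hAB)
  rwa [Matrix.mul_sub, trace_sub, sub_nonneg] at h

end Matrix

lemma nucNorm_eq_trace_sqrt {m n : ℕ} (A : Matrix (Fin m) (Fin n) ℝ) :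
    nucNorm A = (CFC.sqrt (Aᴴ * A)).trace := by
  rw [CFC.sqrt_eq_real_sqrt _ (posSemidef_conjTranspose_mul_self A).nonneg, cfcₙ_eq_cfc,
    (isHermitian_conjTranspose_mul_self A).trace_cfc]
  rfl

lemma nucNorm_of_posSemidef {n : ℕ} {Λ : Matrix (Fin n) (Fin n) ℝ} (hΛ : Λ.PosSemidef) :
    nucNorm Λ = Λ.trace := by
  rw [nucNorm_eq_trace_sqrt, hΛ.isHermitian.eq, CFC.sqrt_mul_self Λ hΛ.nonneg]

lemma lamNorm_sqrt_conjTranspose_mul_self {m n : ℕ} (Λ : Matrix (Fin n) (Fin n) ℝ)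
    (A : Matrix (Fin m) (Fin n) ℝ) : lamNorm Λ (CFC.sqrt (Aᴴ * A)) = lamNorm Λ A := by
  have hP : (CFC.sqrt (Aᴴ * A))ᵀ = CFC.sqrt (Aᴴ * A) := by
    rw [← conjTranspose_eq_transpose_of_trivial]
    exact (CFC.sqrt_nonneg _).posSemidef.isHermitian.eq
  rw [lamNorm, lamNorm, hP, trace_mul_cycle,
    CFC.sqrt_mul_sqrt_self _ (posSemidef_conjTranspose_mul_self A).nonneg,
    conjTranspose_eq_transpose_of_trivial, trace_mul_cycle A]

lemma trace_mul_transpose_le_lamNorm_inv_mul_lamNorm {m n : ℕ} {Λ : Matrix (Fin n) (Fin n) ℝ}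
    (hΛ : Λ.PosDef) (X Y : Matrix (Fin m) (Fin n) ℝ) :
    (X * Yᵀ).trace ≤ lamNorm Λ⁻¹ X * lamNorm Λ Y := by
  set S := CFC.sqrt Λ
  have hSS : S * S = Λ := CFC.sqrt_mul_sqrt_self Λ hΛ.posSemidef.nonneg
  have hS : Sᵀ = S := by
    rw [← conjTranspose_eq_transpose_of_trivial]
    exact (CFC.sqrt_nonneg Λ).posSemidef.isHermitian.eq
  have hSdet : IsUnit S.det := by
    have h : IsUnit (S.det * S.det) := by
      rw [← det_mul, hSS]
      exact (isUnit_iff_isUnit_det Λ).mp hΛ.isUnit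
    exact (IsUnit.mul_iff.mp h).1
  have hSinv : (S⁻¹)ᵀ = S⁻¹ := by rw [transpose_nonsing_inv, hS]
  have hSinvSinv : S⁻¹ * S⁻¹ = Λ⁻¹ := by rw [← Matrix.mul_inv_rev, hSS]
  calc (X * Yᵀ).trace = ((X * S⁻¹) * (Y * S)ᵀ).trace := by
        rw [transpose_mul, hS, Matrix.mul_assoc, ← Matrix.mul_assoc S⁻¹, nonsing_inv_mul S hSdet,
          Matrix.one_mul]
    _ ≤ √((X * S⁻¹) * (X * S⁻¹)ᵀ).trace * √((Y * S) * (Y * S)ᵀ).trace :=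
        trace_mul_transpose_le _ _
    _ = lamNorm Λ⁻¹ X * lamNorm Λ Y := by
        simp only [lamNorm, transpose_mul, hS, hSinv, Matrix.mul_assoc, ← Matrix.mul_assoc S⁻¹,
          ← Matrix.mul_assoc S, hSinvSinv, hSS]

lemma nucNorm_le_lamNorm_inv_mul_sqrt_trace {m n : ℕ} {Λ : Matrix (Fin n) (Fin n) ℝ}
    (hΛ : Λ.PosDef) (G : Matrix (Fin m) (Fin n) ℝ) :
    nucNorm G ≤ lamNorm Λ⁻¹ G * √Λ.trace := by
  have hone : lamNorm Λ (1 : Matrix (Fin n) (Fin n) ℝ) = √Λ.trace := by simp [lamNorm]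
  calc nucNorm G = (CFC.sqrt (Gᴴ * G) * 1ᵀ).trace := by
        rw [transpose_one, Matrix.mul_one, nucNorm_eq_trace_sqrt]
    _ ≤ lamNorm Λ⁻¹ (CFC.sqrt (Gᴴ * G)) * lamNorm Λ 1 :=
        trace_mul_transpose_le_lamNorm_inv_mul_lamNorm hΛ _ _
    _ = lamNorm Λ⁻¹ G * √Λ.trace := by rw [lamNorm_sqrt_conjTranspose_mul_self, hone]

lemma lamNorm_le_specNorm_mul_sqrt_trace {m n : ℕ} {Λ : Matrix (Fin n) (Fin n) ℝ}
    (hΛ : Λ.PosSemidef) (D : Matrix (Fin m) (Fin n) ℝ) :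
    lamNorm Λ D ≤ specNorm D * √Λ.trace := by
  have hD := isHermitian_conjTranspose_mul_self D
  have hle := hΛ.trace_mul_le_trace_mul hD.le_iSup_eigenvalues_smul_one
  rw [Matrix.mul_smul, Matrix.mul_one, trace_smul, smul_eq_mul] at hle
  calc lamNorm Λ D = √(Λ * (Dᴴ * D)).trace := by
        rw [lamNorm, trace_mul_cycle, conjTranspose_eq_transpose_of_trivial, trace_mul_comm]
    _ ≤ √((⨆ j, hD.eigenvalues j) * Λ.trace) := Real.sqrt_le_sqrt hle
    _ = specNorm D * √Λ.trace := Real.sqrt_mul' _ hΛ.trace_nonneg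

theorem lamSmooth_implies_spectralSmooth_general
    {m n : ℕ} (Λ : Matrix (Fin n) (Fin n) ℝ) (hΛ : Λ.PosDef)
    (gradf : Matrix (Fin m) (Fin n) ℝ → Matrix (Fin m) (Fin n) ℝ)
    (hsmooth : ∀ W W' : Matrix (Fin m) (Fin n) ℝ,
      lamNorm Λ⁻¹ (gradf W - gradf W') ≤ lamNorm Λ (W - W')) :
    ∀ W W' : Matrix (Fin m) (Fin n) ℝ,
      nucNorm (gradf W - gradf W') ≤ nucNorm Λ * specNorm (W - W') := by
  intro W W'
  have htrace := hΛ.posSemidef.trace_nonneg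
  calc nucNorm (gradf W - gradf W') ≤ lamNorm Λ⁻¹ (gradf W - gradf W') * √Λ.trace :=
        nucNorm_le_lamNorm_inv_mul_sqrt_trace hΛ _
    _ ≤ lamNorm Λ (W - W') * √Λ.trace := by gcongr; exact hsmooth W W'
    _ ≤ specNorm (W - W') * √Λ.trace * √Λ.trace := by
        gcongr; exact lamNorm_le_specNorm_mul_sqrt_trace hΛ.posSemidef _
    _ = nucNorm Λ * specNorm (W - W') := by
        rw [mul_assoc, Real.mul_self_sqrt htrace, nucNorm_of_posSemidef hΛ.posSemidef, mul_comm]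

/-- 1-Λ-norm Lipschitz smoothness implies `‖Λ‖_*` spectral norm Lipschitz
smoothness. -/
theorem lamSmooth_implies_spectralSmooth
    {m n : ℕ} (Λ : Matrix (Fin n) (Fin n) ℝ) (hΛ : Λ.PosDef)
    (f : Matrix (Fin m) (Fin n) ℝ → ℝ)
    (gradf : Matrix (Fin m) (Fin n) ℝ → Matrix (Fin m) (Fin n) ℝ)
    (hgrad : ∀ W V : Matrix (Fin m) (Fin n) ℝ,
      HasDerivAt (fun t : ℝ => f (W + t • V)) (∑ i, ∑ j, gradf W i j * V i j) 0)
    (hsmooth : ∀ W W' : Matrix (Fin m) (Fin n) ℝ,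
      lamNorm Λ⁻¹ (gradf W - gradf W') ≤ lamNorm Λ (W - W')) :
    ∀ W W' : Matrix (Fin m) (Fin n) ℝ,
      nucNorm (gradf W - gradf W') ≤ nucNorm Λ * specNorm (W - W') :=
  lamSmooth_implies_spectralSmooth_general Λ hΛ gradf hsmooth
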